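/- For every binary matrix A and every k ≥ 1, the k-th root of the fractional biclique partition number of the k-th Kronecker power satisfies (bp_f(A^{⊗k}))^{1/k} ≥ bc_f(A) · (bp_f(A)/bc_f(A))^{1/k}, assuming bc_f(A) > 0. -/

import Mathlib

open Matrix Kronecker BigOperators Filter

/-- A real matrix is binary if every entry is 0 or 1. -/
def IsBinary {m n : Type*} (A : Matrix m n ℝ) : Prop :=
  ∀ i j, A i j = 0 ∨ A i j = 1

/-- A biclique of the bipartite graph of `A`: a pair of nonempty vertex sets with all
edges present. -/
def IsBiclique {m n : Type*} (A : Matrix m n ℝ) (B : Finset m × Finset n) : Prop :=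
  B.1.Nonempty ∧ B.2.Nonempty ∧ ∀ i ∈ B.1, ∀ j ∈ B.2, A i j = 1

/-- A family of bicliques partitioning the edge set of the bipartite graph of `A`. -/
def IsBicliquePartition {m n : Type*} (A : Matrix m n ℝ) {r : ℕ}
    (B : Fin r → Finset m × Finset n) : Prop :=
  (∀ t, IsBiclique A (B t)) ∧ ∀ i j, A i j = 1 → ∃! t, i ∈ (B t).1 ∧ j ∈ (B t).2

/-- A family of bicliques covering the edge set of the bipartite graph of `A`. -/
def IsBicliqueCover {m n : Type*} (A : Matrix m n ℝ) {r : ℕ}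
    (B : Fin r → Finset m × Finset n) : Prop :=
  (∀ t, IsBiclique A (B t)) ∧ ∀ i j, A i j = 1 → ∃ t, i ∈ (B t).1 ∧ j ∈ (B t).2

/-- Biclique partition number. -/
noncomputable def bp {m n : Type*} (A : Matrix m n ℝ) : ℕ :=
  sInf { r : ℕ | ∃ B : Fin r → Finset m × Finset n, IsBicliquePartition A B }

/-- Biclique cover number. -/
noncomputable def bc {m n : Type*} (A : Matrix m n ℝ) : ℕ :=
  sInf { r : ℕ | ∃ B : Fin r → Finset m × Finset n, IsBicliqueCover A B }

/-- Binary rank: minimal `r` admitting a binary factorization `A = U * V`. -/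
noncomputable def binRank {m n : Type*} [Fintype m] [Fintype n] (A : Matrix m n ℝ) : ℕ :=
  sInf { r : ℕ | ∃ U : Matrix m (Fin r) ℝ, ∃ V : Matrix (Fin r) n ℝ,
    IsBinary U ∧ IsBinary V ∧ U * V = A }

/-- Fractional biclique partition number. -/
noncomputable def bpf {m n : Type*} [Fintype m] [Fintype n] [DecidableEq m] [DecidableEq n]
    (A : Matrix m n ℝ) : ℝ :=
  sInf { c : ℝ | ∃ x : Finset m × Finset n → ℝ,
    (∀ B, 0 ≤ x B) ∧ (∀ B, ¬ IsBiclique A B → x B = 0) ∧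
    (∀ i j, A i j = 1 →
      ∑ B : Finset m × Finset n, (if i ∈ B.1 ∧ j ∈ B.2 then x B else 0) = 1) ∧
    c = ∑ B : Finset m × Finset n, x B }

/-- Fractional biclique cover number. -/
noncomputable def bcf {m n : Type*} [Fintype m] [Fintype n] [DecidableEq m] [DecidableEq n]
    (A : Matrix m n ℝ) : ℝ :=
  sInf { c : ℝ | ∃ x : Finset m × Finset n → ℝ,
    (∀ B, 0 ≤ x B) ∧ (∀ B, ¬ IsBiclique A B → x B = 0) ∧
    (∀ i j, A i j = 1 →
      1 ≤ ∑ B : Finset m × Finset n, (if i ∈ B.1 ∧ j ∈ B.2 then x B else 0)) ∧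
    c = ∑ B : Finset m × Finset n, x B }

/-- `k`-th Kronecker power of `A`, indexed by tuples. -/
noncomputable def kronPow {m n : Type*} (A : Matrix m n ℝ) (k : ℕ) :
    Matrix (Fin k → m) (Fin k → n) ℝ :=
  fun i j => ∏ t, A (i t) (j t)

/-- The bipartite adjacency matrix of the Domino graph. -/
noncomputable def D : Matrix (Fin 3) (Fin 3) ℝ := !![1,1,0;1,1,1;0,1,1]

-- ====== section basic (from s1) ======
section Basic
variable {m n : Type*} [Fintype m] [Fintype n] [DecidableEq m] [DecidableEq n]
variable (A : Matrix m n ℝ)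

open Classical in
noncomputable def singX (A : Matrix m n ℝ) : Finset m × Finset n → ℝ :=
  fun B => if (∃ i, B.1 = {i}) ∧ (∃ j, B.2 = {j}) ∧ IsBiclique A B then 1 else 0

lemma singX_feas :
    (∀ B, 0 ≤ singX A B) ∧ (∀ B, ¬ IsBiclique A B → singX A B = 0) ∧
    (∀ i j, A i j = 1 →
      ∑ B : Finset m × Finset n, (if i ∈ B.1 ∧ j ∈ B.2 then singX A B else 0) = 1) := by
  classical
  refine ⟨fun B => ?_, fun B hB => ?_, fun i j hij => ?_⟩
  · unfold singX; split <;> norm_num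
  · unfold singX; rw [if_neg]; rintro ⟨-, -, h⟩; exact hB h
  · rw [Finset.sum_eq_single_of_mem (({i}, {j}) : Finset m × Finset n) (Finset.mem_univ _)]
    · rw [if_pos ⟨Finset.mem_singleton_self i, Finset.mem_singleton_self j⟩]
      unfold singX
      rw [if_pos]
      exact ⟨⟨i, rfl⟩, ⟨j, rfl⟩, ⟨i, Finset.mem_singleton_self i⟩,
        ⟨j, Finset.mem_singleton_self j⟩, by
          intro a ha b hb
          simp only [Finset.mem_singleton] at ha hb
          rw [ha, hb]; exact hij⟩
    · intro B _ hBne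
      split_ifs with hmem
      · unfold singX
        rw [if_neg]
        rintro ⟨⟨a, ha⟩, ⟨b, hb⟩, -⟩
        apply hBne
        have hai : a = i := by
          have := hmem.1; rw [ha, Finset.mem_singleton] at this; exact this.symm
        have hbj : b = j := by
          have := hmem.2; rw [hb, Finset.mem_singleton] at this; exact this.symm
        ext1
        · rw [ha, hai]
        · rw [hb, hbj]
      · rfl

lemma bpf_set_nonempty : { c : ℝ | ∃ x : Finset m × Finset n → ℝ,
    (∀ B, 0 ≤ x B) ∧ (∀ B, ¬ IsBiclique A B → x B = 0) ∧
    (∀ i j, A i j = 1 →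
      ∑ B : Finset m × Finset n, (if i ∈ B.1 ∧ j ∈ B.2 then x B else 0) = 1) ∧
    c = ∑ B : Finset m × Finset n, x B }.Nonempty :=
  ⟨_, singX A, (singX_feas A).1, (singX_feas A).2.1, (singX_feas A).2.2, rfl⟩

lemma bcf_set_nonempty : { c : ℝ | ∃ x : Finset m × Finset n → ℝ,
    (∀ B, 0 ≤ x B) ∧ (∀ B, ¬ IsBiclique A B → x B = 0) ∧
    (∀ i j, A i j = 1 →
      1 ≤ ∑ B : Finset m × Finset n, (if i ∈ B.1 ∧ j ∈ B.2 then x B else 0)) ∧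
    c = ∑ B : Finset m × Finset n, x B }.Nonempty :=
  ⟨_, singX A, (singX_feas A).1, (singX_feas A).2.1,
    fun i j hij => ((singX_feas A).2.2 i j hij).ge, rfl⟩

lemma bpf_set_bdd : ∀ c ∈ { c : ℝ | ∃ x : Finset m × Finset n → ℝ,
    (∀ B, 0 ≤ x B) ∧ (∀ B, ¬ IsBiclique A B → x B = 0) ∧
    (∀ i j, A i j = 1 →
      ∑ B : Finset m × Finset n, (if i ∈ B.1 ∧ j ∈ B.2 then x B else 0) = 1) ∧
    c = ∑ B : Finset m × Finset n, x B }, (0:ℝ) ≤ c := by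
  rintro c ⟨x, hx0, -, -, rfl⟩
  exact Finset.sum_nonneg fun B _ => hx0 B

lemma bcf_set_bdd : ∀ c ∈ { c : ℝ | ∃ x : Finset m × Finset n → ℝ,
    (∀ B, 0 ≤ x B) ∧ (∀ B, ¬ IsBiclique A B → x B = 0) ∧
    (∀ i j, A i j = 1 →
      1 ≤ ∑ B : Finset m × Finset n, (if i ∈ B.1 ∧ j ∈ B.2 then x B else 0)) ∧
    c = ∑ B : Finset m × Finset n, x B }, (0:ℝ) ≤ c := by
  rintro c ⟨x, hx0, -, -, rfl⟩
  exact Finset.sum_nonneg fun B _ => hx0 B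

lemma bpf_nonneg : 0 ≤ bpf A := le_csInf (bpf_set_nonempty A) (bpf_set_bdd A)

lemma bcf_nonneg : 0 ≤ bcf A := le_csInf (bcf_set_nonempty A) (bcf_set_bdd A)

lemma bpf_le {x : Finset m × Finset n → ℝ} (h1 : ∀ B, 0 ≤ x B)
    (h2 : ∀ B, ¬ IsBiclique A B → x B = 0)
    (h3 : ∀ i j, A i j = 1 →
      ∑ B : Finset m × Finset n, (if i ∈ B.1 ∧ j ∈ B.2 then x B else 0) = 1) :
    bpf A ≤ ∑ B : Finset m × Finset n, x B :=
  csInf_le ⟨0, bpf_set_bdd A⟩ ⟨x, h1, h2, h3, rfl⟩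

lemma bcf_le {x : Finset m × Finset n → ℝ} (h1 : ∀ B, 0 ≤ x B)
    (h2 : ∀ B, ¬ IsBiclique A B → x B = 0)
    (h3 : ∀ i j, A i j = 1 →
      1 ≤ ∑ B : Finset m × Finset n, (if i ∈ B.1 ∧ j ∈ B.2 then x B else 0)) :
    bcf A ≤ ∑ B : Finset m × Finset n, x B :=
  csInf_le ⟨0, bcf_set_bdd A⟩ ⟨x, h1, h2, h3, rfl⟩

lemma le_bpf {c : ℝ} (h : ∀ x : Finset m × Finset n → ℝ, (∀ B, 0 ≤ x B) →
    (∀ B, ¬ IsBiclique A B → x B = 0) →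
    (∀ i j, A i j = 1 →
      ∑ B : Finset m × Finset n, (if i ∈ B.1 ∧ j ∈ B.2 then x B else 0) = 1) →
    c ≤ ∑ B : Finset m × Finset n, x B) : c ≤ bpf A :=
  le_csInf (bpf_set_nonempty A) (by rintro d ⟨x, h1, h2, h3, rfl⟩; exact h x h1 h2 h3)

lemma bcf_le_bpf : bcf A ≤ bpf A :=
  csInf_le_csInf ⟨0, bcf_set_bdd A⟩ (bpf_set_nonempty A)
    (by rintro c ⟨x, h1, h2, h3, rfl⟩; exact ⟨x, h1, h2, fun i j hij => (h3 i j hij).ge, rfl⟩)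

end Basic

-- ====== sum lemmas and slices (from s2) ======
section SumLemmas
variable {σ τ : Type*} [Fintype σ] [Fintype τ] [DecidableEq σ]

lemma swap_sum (F : τ → ℝ) (g : τ → σ) (q : σ → Prop) [DecidablePred q] :
    ∑ S : σ, (if q S then ∑ P : τ, (if g P = S then F P else 0) else 0)
      = ∑ P : τ, if q (g P) then F P else 0 := by
  have h : ∀ S : σ, (if q S then ∑ P : τ, (if g P = S then F P else 0) else 0)
      = ∑ P : τ, (if g P = S then (if q S then F P else 0) else 0) := by
    intro S
    split_ifs with h
    · simp [h]
    · simp [h]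
  rw [Finset.sum_congr rfl fun S _ => h S, Finset.sum_comm]
  refine Finset.sum_congr rfl fun P _ => ?_
  rw [Finset.sum_ite_eq Finset.univ (g P) (fun S => if q S then F P else 0)]
  simp

lemma sum_fiber (F : τ → ℝ) (g : τ → σ) :
    ∑ S : σ, ∑ P : τ, (if g P = S then F P else 0) = ∑ P : τ, F P := by
  rw [Finset.sum_comm]
  refine Finset.sum_congr rfl fun P _ => ?_
  rw [Finset.sum_ite_eq Finset.univ (g P)]
  simp

lemma prod_eq_one_of_binary {ι : Type*} {s : Finset ι} {f : ι → ℝ}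
    (hb : ∀ t ∈ s, f t = 0 ∨ f t = 1) (hp : ∏ t ∈ s, f t = 1) :
    ∀ t ∈ s, f t = 1 := by
  intro t ht
  rcases hb t ht with h0 | h1
  · rw [Finset.prod_eq_zero ht h0] at hp
    norm_num at hp
  · exact h1

end SumLemmas

section Slice
variable {α : Type*} [DecidableEq α]

def kslice (i₀ : α) {k : ℕ} (P : Finset (Fin (k+1) → α)) : Finset (Fin k → α) :=
  (P.filter (fun f => f 0 = i₀)).image Fin.tail

lemma mem_kslice {i₀ : α} {k : ℕ} {P : Finset (Fin (k+1) → α)} {u : Fin k → α} :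
    u ∈ kslice i₀ P ↔ Fin.cons i₀ u ∈ P := by
  constructor
  · rintro hu
    rw [kslice, Finset.mem_image] at hu
    obtain ⟨f, hf, rfl⟩ := hu
    rw [Finset.mem_filter] at hf
    rw [← hf.2, Fin.cons_self_tail]
    exact hf.1
  · intro h
    rw [kslice, Finset.mem_image]
    exact ⟨Fin.cons i₀ u, Finset.mem_filter.2 ⟨h, Fin.cons_zero _ _⟩, Fin.tail_cons _ _⟩

def projF {k : ℕ} (P : Finset (Fin (k+1) → α)) : Finset α := P.image (fun f => f 0)

lemma mem_projF {i₀ : α} {k : ℕ} {P : Finset (Fin (k+1) → α)} :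
    i₀ ∈ projF P ↔ (kslice i₀ P).Nonempty := by
  rw [projF, Finset.mem_image]
  constructor
  · rintro ⟨f, hf, rfl⟩
    exact ⟨Fin.tail f, mem_kslice.2 (by rwa [Fin.cons_self_tail])⟩
  · rintro ⟨u, hu⟩
    exact ⟨Fin.cons i₀ u, mem_kslice.1 hu, Fin.cons_zero _ _⟩

end Slice

-- ====== kronPow lemmas ======
section Kron
variable {m n : Type*} (A : Matrix m n ℝ)

lemma kronPow_binary (hA : IsBinary A) (k : ℕ) : IsBinary (kronPow A k) := by
  intro i j
  unfold kronPow
  refine Finset.prod_induction _ (fun x => x = 0 ∨ x = 1) ?_ (Or.inr rfl) ?_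
  · rintro a b (ha | ha) (hb | hb) <;> simp [ha, hb]
  · intro t _; exact hA _ _

lemma kronPow_succ {k : ℕ} (i₀ : m) (u : Fin k → m) (j₀ : n) (v : Fin k → n) :
    kronPow A (k+1) (Fin.cons i₀ u) (Fin.cons j₀ v) = A i₀ j₀ * kronPow A k u v := by
  unfold kronPow
  rw [Fin.prod_univ_succ]
  simp [Fin.cons_succ]

end Kron

-- ====== the key inequality ======
lemma key_step {m n : Type*} [Fintype m] [Fintype n] [DecidableEq m] [DecidableEq n]
    (A : Matrix m n ℝ) (hA : IsBinary A) (k : ℕ) :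
    bcf A * bpf (kronPow A k) ≤ bpf (kronPow A (k+1)) := by
  classical
  set β := bpf (kronPow A k) with hβdef
  rcases eq_or_lt_of_le (bpf_nonneg (kronPow A k)) with h0 | hβ
  · rw [hβdef, ← h0, mul_zero]; exact bpf_nonneg _
  refine le_bpf _ (fun x h1 h2 h3 => ?_)
  set V : m → n → ℝ := fun i₀ j₀ => ∑ P : Finset (Fin (k+1) → m) × Finset (Fin (k+1) → n),
    (if (kslice i₀ P.1).Nonempty ∧ (kslice j₀ P.2).Nonempty then x P else 0) with hVdef
  -- Step A : every edge of A sees weight at least β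
  have hV : ∀ i₀ j₀, A i₀ j₀ = 1 → β ≤ V i₀ j₀ := by
    intro i₀ j₀ hij
    set g : Finset (Fin (k+1) → m) × Finset (Fin (k+1) → n) →
        Finset (Fin k → m) × Finset (Fin k → n) :=
      fun P => (kslice i₀ P.1, kslice j₀ P.2) with hg
    set x' : Finset (Fin k → m) × Finset (Fin k → n) → ℝ :=
      fun S => if S.1.Nonempty ∧ S.2.Nonempty then ∑ P, (if g P = S then x P else 0) else 0
      with hx'
    have h1' : ∀ S, 0 ≤ x' S := by
      intro S
      rw [hx']
      dsimp only
      split_ifs with h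
      · exact Finset.sum_nonneg fun P _ => by split_ifs; exacts [h1 P, le_refl 0]
      · exact le_refl 0
    have h2' : ∀ S, ¬ IsBiclique (kronPow A k) S → x' S = 0 := by
      intro S hS
      rw [hx']
      dsimp only
      split_ifs with hne
      · refine Finset.sum_eq_zero fun P _ => ?_
        split_ifs with hgP
        · by_contra hxP
          have hPb : IsBiclique (kronPow A (k+1)) P := by
            by_contra hb; exact hxP (h2 P hb)
          subst hgP
          apply hS
          refine ⟨hne.1, hne.2, fun u hu v hv => ?_⟩
          simp only [hg] at hu hv
          have hone := hPb.2.2 _ (mem_kslice.1 hu) _ (mem_kslice.1 hv)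
          rw [kronPow_succ] at hone
          rcases kronPow_binary A hA k u v with h | h
          · rw [h, mul_zero] at hone; norm_num at hone
          · exact h
        · rfl
      · rfl
    have h3' : ∀ u v, kronPow A k u v = 1 →
        ∑ S : Finset (Fin k → m) × Finset (Fin k → n),
          (if u ∈ S.1 ∧ v ∈ S.2 then x' S else 0) = 1 := by
      intro u v huv
      have hedge : kronPow A (k+1) (Fin.cons i₀ u) (Fin.cons j₀ v) = 1 := by
        rw [kronPow_succ, hij, huv, one_mul]
      have step1 : ∀ S : Finset (Fin k → m) × Finset (Fin k → n),
          (if u ∈ S.1 ∧ v ∈ S.2 then x' S else 0)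
            = (if (u ∈ S.1 ∧ v ∈ S.2) ∧ (S.1.Nonempty ∧ S.2.Nonempty) then
                ∑ P, (if g P = S then x P else 0) else 0) := by
        intro S
        rw [hx']
        dsimp only
        by_cases hmem : u ∈ S.1 ∧ v ∈ S.2 <;>
          by_cases hne : S.1.Nonempty ∧ S.2.Nonempty <;> simp [hmem, hne]
      rw [Finset.sum_congr rfl fun S _ => step1 S,
        swap_sum x g (fun S => (u ∈ S.1 ∧ v ∈ S.2) ∧ (S.1.Nonempty ∧ S.2.Nonempty))]
      refine (Finset.sum_congr rfl fun P _ => ?_).trans (h3 _ _ hedge)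
      refine if_congr ?_ rfl rfl
      simp only [hg]
      constructor
      · rintro ⟨⟨hu, hv⟩, -⟩
        exact ⟨mem_kslice.1 hu, mem_kslice.1 hv⟩
      · rintro ⟨hu, hv⟩
        have hu' := mem_kslice.2 hu
        have hv' := mem_kslice.2 hv
        exact ⟨⟨hu', hv'⟩, ⟨_, hu'⟩, ⟨_, hv'⟩⟩
    have hle := bpf_le (kronPow A k) h1' h2' h3'
    have hval : ∑ S : Finset (Fin k → m) × Finset (Fin k → n), x' S = V i₀ j₀ := by
      rw [hx']
      dsimp only
      rw [swap_sum x g (fun S => S.1.Nonempty ∧ S.2.Nonempty)]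
    rw [hval] at hle
    exact hle
  -- Step B : the projection is a fractional cover of A of value β⁻¹ * (∑ x)
  set g2 : Finset (Fin (k+1) → m) × Finset (Fin (k+1) → n) → Finset m × Finset n :=
    fun P => (projF P.1, projF P.2) with hg2
  set y : Finset m × Finset n → ℝ :=
    fun S => β⁻¹ * ∑ P, (if g2 P = S then x P else 0) with hy
  have hy1 : ∀ S, 0 ≤ y S := by
    intro S
    rw [hy]
    exact mul_nonneg (inv_nonneg.2 hβ.le)
      (Finset.sum_nonneg fun P _ => by split_ifs; exacts [h1 P, le_refl 0])
  have hy2 : ∀ S, ¬ IsBiclique A S → y S = 0 := by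
    intro S hS
    rw [hy]
    dsimp only
    have hz : ∑ P, (if g2 P = S then x P else 0) = 0 := by
      refine Finset.sum_eq_zero fun P _ => ?_
      split_ifs with hgP
      · by_contra hxP
        have hPb : IsBiclique (kronPow A (k+1)) P := by
          by_contra hb; exact hxP (h2 P hb)
        subst hgP
        apply hS
        refine ⟨hPb.1.image _, hPb.2.1.image _, fun i hi j hj => ?_⟩
        simp only [hg2, projF] at hi hj
        obtain ⟨f, hf, rfl⟩ := Finset.mem_image.1 hi
        obtain ⟨g', hg', rfl⟩ := Finset.mem_image.1 hj
        have hone := hPb.2.2 f hf g' hg'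
        exact prod_eq_one_of_binary (fun t _ => hA _ _) hone 0 (Finset.mem_univ 0)
      · rfl
    rw [hz, mul_zero]
  have hy3 : ∀ i₀ j₀, A i₀ j₀ = 1 →
      1 ≤ ∑ S : Finset m × Finset n, (if i₀ ∈ S.1 ∧ j₀ ∈ S.2 then y S else 0) := by
    intro i₀ j₀ hij
    have hLHS : ∑ S : Finset m × Finset n, (if i₀ ∈ S.1 ∧ j₀ ∈ S.2 then y S else 0)
        = β⁻¹ * ∑ S : Finset m × Finset n,
            (if i₀ ∈ S.1 ∧ j₀ ∈ S.2 then ∑ P, (if g2 P = S then x P else 0) else 0) := by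
      rw [Finset.mul_sum]
      refine Finset.sum_congr rfl fun S _ => ?_
      rw [hy]
      dsimp only
      split_ifs with h
      · rfl
      · rw [mul_zero]
    rw [hLHS, swap_sum x g2 (fun S => i₀ ∈ S.1 ∧ j₀ ∈ S.2)]
    have hcond : (∑ P, if i₀ ∈ (g2 P).1 ∧ j₀ ∈ (g2 P).2 then x P else 0) = V i₀ j₀ := by
      rw [hVdef]
      refine Finset.sum_congr rfl fun P _ => ?_
      refine if_congr ?_ rfl rfl
      simp only [hg2]
      exact and_congr mem_projF mem_projF
    rw [hcond]
    rw [← inv_mul_cancel₀ (ne_of_gt hβ)]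
    exact mul_le_mul_of_nonneg_left (hV i₀ j₀ hij) (inv_nonneg.2 hβ.le)
  have hbcf := bcf_le A hy1 hy2 hy3
  have hyval : ∑ S : Finset m × Finset n, y S
      = β⁻¹ * ∑ P : Finset (Fin (k+1) → m) × Finset (Fin (k+1) → n), x P := by
    rw [hy]
    dsimp only
    rw [← Finset.mul_sum, sum_fiber x g2]
  rw [hyval] at hbcf
  calc bcf A * β ≤ (β⁻¹ * ∑ P, x P) * β := mul_le_mul_of_nonneg_right hbcf hβ.le
    _ = ∑ P, x P := by rw [mul_comm, ← mul_assoc, mul_inv_cancel₀ (ne_of_gt hβ : β ≠ 0), one_mul]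

-- ====== transfer along Fin 1 ======
section Transfer
variable {m n : Type*} [Fintype m] [Fintype n] [DecidableEq m] [DecidableEq n]

lemma kronPow_one_apply (A : Matrix m n ℝ) (f : Fin 1 → m) (g : Fin 1 → n) :
    kronPow A 1 f g = A (f 0) (g 0) := by
  unfold kronPow; rw [Fin.prod_univ_one]

lemma bpf_le_kronPow_one (A : Matrix m n ℝ) : bpf A ≤ bpf (kronPow A 1) := by
  classical
  refine le_bpf _ (fun x₁ h1 h2 h3 => ?_)
  set e : m ≃ (Fin 1 → m) := (Equiv.funUnique (Fin 1) m).symm with he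
  set e' : n ≃ (Fin 1 → n) := (Equiv.funUnique (Fin 1) n).symm with he'
  set E : Finset m × Finset n ≃ Finset (Fin 1 → m) × Finset (Fin 1 → n) :=
    (e.finsetCongr).prodCongr (e'.finsetCongr) with hE
  have hE1 : ∀ S : Finset m × Finset n, (E S).1 = S.1.map e.toEmbedding := by
    intro S; simp [hE, Equiv.finsetCongr_apply]
  have hE2 : ∀ S : Finset m × Finset n, (E S).2 = S.2.map e'.toEmbedding := by
    intro S; simp [hE, Equiv.finsetCongr_apply]
  have hmem1 : ∀ (i : m) (S : Finset m × Finset n), (e i ∈ (E S).1) ↔ i ∈ S.1 := by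
    intro i S; rw [hE1]; exact Finset.mem_map' _
  have hmem2 : ∀ (j : n) (S : Finset m × Finset n), (e' j ∈ (E S).2) ↔ j ∈ S.2 := by
    intro j S; rw [hE2]; exact Finset.mem_map' _
  have happ : ∀ (i : m), (e i) 0 = i := fun i => rfl
  have happ' : ∀ (j : n), (e' j) 0 = j := fun j => rfl
  have hb1 : ∀ B, 0 ≤ x₁ (E B) := fun B => h1 _
  have hb2 : ∀ B, ¬ IsBiclique A B → x₁ (E B) = 0 := by
    intro S hS
    apply h2
    rintro ⟨hne1, hne2, hedge⟩
    apply hS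
    refine ⟨?_, ?_, fun i hi j hj => ?_⟩
    · rw [hE1] at hne1; exact Finset.map_nonempty.1 hne1
    · rw [hE2] at hne2; exact Finset.map_nonempty.1 hne2
    · have := hedge (e i) ((hmem1 i S).2 hi) (e' j) ((hmem2 j S).2 hj)
      rwa [kronPow_one_apply, happ, happ'] at this
  have hb3 : ∀ i j, A i j = 1 →
      ∑ B : Finset m × Finset n, (if i ∈ B.1 ∧ j ∈ B.2 then x₁ (E B) else 0) = 1 := by
    intro i j hij
    have hedge : kronPow A 1 (e i) (e' j) = 1 := by
      rw [kronPow_one_apply, happ, happ']; exact hij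
    rw [Fintype.sum_equiv E _
      (fun T => if e i ∈ T.1 ∧ e' j ∈ T.2 then x₁ T else 0)
      (fun S => by rw [if_congr (and_congr (hmem1 i S).symm (hmem2 j S).symm) rfl rfl])]
    exact h3 _ _ hedge
  have hle := bpf_le A hb1 hb2 hb3
  refine hle.trans (le_of_eq ?_)
  exact Fintype.sum_equiv E _ _ (fun S => rfl)

lemma kron_chain (A : Matrix m n ℝ) (hA : IsBinary A) :
    ∀ k : ℕ, bcf A ^ k * bpf A ≤ bpf (kronPow A (k+1)) := by
  intro k
  induction k with
  | zero => simpa using bpf_le_kronPow_one A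
  | succ k ih =>
    calc bcf A ^ (k+1) * bpf A = bcf A * (bcf A ^ k * bpf A) := by ring
      _ ≤ bcf A * bpf (kronPow A (k+1)) := mul_le_mul_of_nonneg_left ih (bcf_nonneg A)
      _ ≤ bpf (kronPow A (k+1+1)) := key_step A hA (k+1)

end Transfer


/-- Taking k-th roots: `(bpf (A^{⊗k}))^{1/k} ≥ bcf A * (bpf A / bcf A)^{1/k}`. -/
theorem bpf_kronPow_root_ge {m n : Type*} [Fintype m] [Fintype n] [DecidableEq m] [DecidableEq n]
    (A : Matrix m n ℝ) (hA : IsBinary A) (k : ℕ) (hk : 1 ≤ k) (hbc : 0 < bcf A) :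
    (bpf (kronPow A k)) ^ ((1 : ℝ) / k) ≥ bcf A * (bpf A / bcf A) ^ ((1 : ℝ) / k) := by
  obtain ⟨k', rfl⟩ : ∃ k', k = k' + 1 := ⟨k - 1, (Nat.succ_pred_eq_of_pos hk).symm⟩
  have hP : 0 < bpf A := lt_of_lt_of_le hbc (bcf_le_bpf A)
  have hK : bcf A ^ k' * bpf A ≤ bpf (kronPow A (k'+1)) := kron_chain A hA k'
  have hkR : (0:ℝ) < ((k' + 1 : ℕ) : ℝ) := by positivity
  set r : ℝ := (1 : ℝ) / ((k' + 1 : ℕ) : ℝ) with hr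
  have hrpos : 0 < r := by positivity
  have h1 : (bcf A ^ k' * bpf A) ^ r ≤ (bpf (kronPow A (k'+1))) ^ r :=
    Real.rpow_le_rpow (by positivity) hK hrpos.le
  refine le_trans (le_of_eq ?_) h1
  rw [Real.mul_rpow (by positivity) hP.le, ← Real.rpow_natCast (bcf A) k',
    ← Real.rpow_mul hbc.le]
  have hkr : (k' : ℝ) * r = 1 - r := by
    rw [hr]
    push_cast
    field_simp
    ring
  rw [hkr, Real.rpow_sub hbc, Real.rpow_one, Real.div_rpow hP.le hbc.le]
  have hCr : (0:ℝ) < bcf A ^ r := Real.rpow_pos_of_pos hbc r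
  field_simp
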